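/- arXiv:0902.2474 — 3 statements merged into one kernel-verified Lean document; each statement's English description precedes it below -/
import Mathlib

section
/- Let n, q be positive integers with q ≥ 2n, and define v̂ : ℝ² → ℝ² by v̂(x,y) = (x + n·cos(2πqy), y). Then v̂({0} × [-n, n]) is (1/q)-dense in the square [-n, n] × [-n, n]: for every point p in the square there exists y ∈ [-n, n] with dist(v̂(0,y), p) ≤ 1/q. -/
open Real
noncomputable section
abbrev E := EuclideanSpace ℝ (Fin 2)
/-- The point `(a, b)` of the plane. -/
def pt (a b : ℝ) : E := WithLp.toLp 2 ![a, b]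
/-- The integer vector `v` viewed as a point of the plane. -/
def ivec (v : Fin 2 → ℤ) : E := WithLp.toLp 2 (fun i => (v i : ℝ))

/-!
Between consecutive points `k / (2q)` and `(k + 1) / (2q)` of the grid `ℤ / (2q)`, the abscissa
`n cos (2πqy)` of the curve runs from `±n` to `∓n`, so by the intermediate value theorem it takes
every value in `[-n, n]`. Since `2qn` is an integer, these grid strips tile `[-n, n]`; in the strip
containing the height of `p`, the curve therefore passes through a point at the abscissa of `p`,
at vertical distance at most `1 / (2q)` from it.
-/

lemma exists_int_Icc_subset_of_abs_le {t : ℝ} {m : ℕ} (hm : 0 < m) (ht : |t| ≤ m) :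
    ∃ k : ℤ, -(m : ℝ) ≤ k ∧ (k : ℝ) + 1 ≤ m ∧ t ∈ Set.Icc (k : ℝ) (k + 1) := by
  obtain ⟨htl, htr⟩ := abs_le.mp ht
  rcases lt_or_ge t m with h | h
  · refine ⟨⌊t⌋, ?_, ?_, Int.floor_le t, (Int.lt_floor_add_one t).le⟩
    · exact_mod_cast Int.le_floor.mpr (by exact_mod_cast htl)
    · exact_mod_cast Int.floor_lt.mpr (by exact_mod_cast h)
  · refine ⟨m - 1, ?_, by simp, ?_, ?_⟩ <;> push_cast
    · linarith [(Nat.one_le_cast (α := ℝ)).mpr hm]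
    · linarith
    · linarith

lemma exists_mem_Icc_mul_cos_pi_mul_eq (k : ℤ) {r a : ℝ} (ha : |a| ≤ r) :
    ∃ s ∈ Set.Icc (k : ℝ) (k + 1), r * cos (π * s) = a := by
  have hk : Set.Icc (-r) r ⊆ Set.uIcc (r * cos (π * k)) (r * cos (π * (k + 1))) := by
    rw [mul_comm π, mul_comm π, add_mul, one_mul, cos_add_pi, cos_int_mul_pi]
    rcases k.even_or_odd with h | h <;>
      simp only [h.neg_one_zpow, mul_one, mul_neg, neg_neg, Set.Icc_subset_uIcc,
        Set.Icc_subset_uIcc']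
  have hcont : ContinuousOn (fun s => r * cos (π * s)) (Set.uIcc (k : ℝ) (k + 1)) := by
    fun_prop
  obtain ⟨s, hs, hsa⟩ := intermediate_value_uIcc hcont (hk (abs_le.mp ha))
  rw [Set.uIcc_of_le (le_add_of_nonneg_right zero_le_one)] at hs
  exact ⟨s, hs, hsa⟩

lemma dist_eq_abs_sub_of_apply_zero_eq {z w : E} (h : z 0 = w 0) : dist z w = |z 1 - w 1| := by
  rw [EuclideanSpace.dist_eq, Fin.sum_univ_two, h, dist_self, Real.dist_eq]
  simp [Real.sqrt_sq_eq_abs]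

/-- For `q ≥ 2n`, the image of the vertical segment `{0} × [-n,n]` under the shear
`v̂(x,y) = (x + n·cos(2πqy), y)` is `(1/q)`-dense in the square `[-n,n] × [-n,n]`. -/
theorem stmt_6 (n q : ℕ) (hn : 0 < n) (hq : 2 * n ≤ q) (v : E → E)
    (hv : ∀ z : E, v z 0 = z 0 + (n : ℝ) * Real.cos (2 * π * (q : ℝ) * z 1) ∧ v z 1 = z 1) :
    ∀ p : E, |p 0| ≤ (n : ℝ) → |p 1| ≤ (n : ℝ) →
      ∃ y : ℝ, -(n : ℝ) ≤ y ∧ y ≤ (n : ℝ) ∧ dist (v (pt 0 y)) p ≤ 1 / (q : ℝ) := by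
  intro p ha hb
  have hq₀ : 0 < q := by omega
  have hq₂ : (0 : ℝ) < 2 * q := by positivity
  have hb' : |2 * q * p 1| ≤ ((2 * q * n : ℕ) : ℝ) := by
    rw [abs_mul, abs_of_pos hq₂]
    push_cast
    gcongr
  obtain ⟨k, hkl, hkr, htl, htr⟩ := exists_int_Icc_subset_of_abs_le (by positivity) hb'
  obtain ⟨s, ⟨hsl, hsr⟩, hsa⟩ := exists_mem_Icc_mul_cos_pi_mul_eq k ha
  push_cast at hkl hkr
  refine ⟨s / (2 * q), ?_, ?_, ?_⟩
  · rw [le_div_iff₀ hq₂]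
    linarith
  · rw [div_le_iff₀ hq₂]
    linarith
  have hv₀ : v (pt 0 (s / (2 * q))) 0 = p 0 := by
    have : 2 * π * q * (s / (2 * q)) = π * s := by field_simp
    simp [(hv _).1, pt, this, hsa]
  rw [dist_eq_abs_sub_of_apply_zero_eq hv₀, (hv _).2]
  have hy : (pt 0 (s / (2 * q))) 1 - p 1 = (s - 2 * q * p 1) / (2 * q) := by
    simp only [pt, Matrix.cons_val_one, Matrix.cons_val_zero]
    field_simp
  calc |(pt 0 (s / (2 * q))) 1 - p 1| = |s - 2 * q * p 1| / (2 * q) := by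
        rw [hy, abs_div, abs_of_pos hq₂]
    _ ≤ 1 / (2 * q) := by gcongr; exact abs_sub_le_iff.mpr ⟨by linarith, by linarith⟩
    _ ≤ 1 / q := by gcongr; linarith
end
end

section
/- If a homeomorphism f : T² → T² is weak spreading, then f is topologically weak mixing; in particular, for every open set U ⊂ T² and every ε > 0 there exists n > 0 such that fⁿ(U) is ε-dense in T². -/
open Real
noncomputable section
/-- The 2-torus. -/
abbrev T := AddCircle (1 : ℝ) × AddCircle (1 : ℝ)
/-- The quotient projection from the plane to the torus. -/
def pr (z : E) : T := ((z 0 : AddCircle (1 : ℝ)), (z 1 : AddCircle (1 : ℝ)))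
/-- The (weak) spreading condition for a lift: every open set has an iterate which is
`ε`-dense in some ball of radius `N`, for all `ε > 0`, `N > 0`. -/
def Spreading (fh : E → E) : Prop :=
  ∀ U : Set E, IsOpen U → U.Nonempty → ∀ ε > (0 : ℝ), ∀ N > (0 : ℝ), ∃ n > 0, ∃ c : E,
    ∀ p ∈ Metric.ball c N, ∃ a ∈ U, dist (fh^[n] a) p ≤ ε

/-!
Points of the torus lift to points of any ball of radius 1 in the plane, and the projection is
1-Lipschitz, so the `ε`-density of `fhⁿ(U)` in a unit ball that weak spreading provides projects to
`ε`-density of `fⁿ(U)` in the torus. Density of iterates of every open set for every `ε` gives, for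
open `U` and `V₁, V₂`, a single time `n` at which `fⁿ(U)` meets both `V₁` and `V₂`; applied to
`U = U₁ ∩ f⁻ᵐ(U₂)` and `V₂' = f⁻ᵐ(V₂)`, where `fᵐ(U₁)` meets `U₂`, this makes `f × f` topologically
transitive.
-/

open Function Metric Set

lemma continuous_pr : Continuous pr :=
  ((AddCircle.continuous_mk' 1).comp (EuclideanSpace.proj 0).continuous).prodMk
    ((AddCircle.continuous_mk' 1).comp (EuclideanSpace.proj 1).continuous)

lemma dist_pr_le (x y : E) : dist (pr x) (pr y) ≤ dist x y := by
  have h (i : Fin 2) : dist ((x i : AddCircle (1 : ℝ))) (y i) ≤ dist x y :=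
    calc dist ((x i : AddCircle (1 : ℝ))) (y i) = ‖((x i - y i : ℝ) : AddCircle (1 : ℝ))‖ := by
          rw [dist_eq_norm, AddCircle.coe_sub]
      _ ≤ ‖x i - y i‖ := QuotientAddGroup.norm_mk_le_norm
      _ ≤ dist x y := (dist_eq_norm (x i) (y i)).symm.trans_le (PiLp.dist_apply_le x y i)
  exact max_le (h 0) (h 1)

lemma exists_mem_ball_pr_eq (c : E) (p : T) : ∃ z ∈ ball c 1, pr z = p := by
  have rep (q : AddCircle (1 : ℝ)) (a : ℝ) :
      ∃ r : ℝ, |r - a| ≤ 2⁻¹ ∧ (r : AddCircle (1 : ℝ)) = q := by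
    obtain ⟨r, hr, rfl⟩ := (AddCircle.coe_image_Icc_eq (1 : ℝ) (a - 2⁻¹)).symm ▸ mem_univ q
    exact ⟨r, abs_le.2 ⟨by linarith [hr.1], by linarith [hr.2]⟩, rfl⟩
  obtain ⟨r₀, h₀, hr₀⟩ := rep p.1 (c 0)
  obtain ⟨r₁, h₁, hr₁⟩ := rep p.2 (c 1)
  refine ⟨pt r₀ r₁, ?_, by simp [pr, pt, hr₀, hr₁]⟩
  rw [mem_ball, EuclideanSpace.dist_eq, Real.sqrt_lt' one_pos, Fin.sum_univ_two, Real.dist_eq,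
    Real.dist_eq]
  simp only [pt, PiLp.toLp_apply, Matrix.cons_val_zero, Matrix.cons_val_one]
  nlinarith [abs_nonneg (r₀ - c 0), abs_nonneg (r₁ - c 1)]

lemma pr_surjective : Surjective pr := fun p => (exists_mem_ball_pr_eq 0 p).imp fun _ => And.right

section DenseIterates

variable {X : Type*} [PseudoMetricSpace X] {g : X → X}

def HasDenseIterates (g : X → X) : Prop :=
  ∀ U : Set X, IsOpen U → U.Nonempty → ∀ ε > (0 : ℝ), ∃ n > 0,
    ∀ p : X, ∃ a ∈ U, dist (g^[n] a) p ≤ ε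

lemma HasDenseIterates.exists_iterate_mem_mem (hg : HasDenseIterates g) {U V₁ V₂ : Set X}
    (hU : IsOpen U) (hU' : U.Nonempty) (hV₁ : IsOpen V₁) (hV₁' : V₁.Nonempty) (hV₂ : IsOpen V₂)
    (hV₂' : V₂.Nonempty) : ∃ n > 0, ∃ a ∈ U, ∃ b ∈ U, g^[n] a ∈ V₁ ∧ g^[n] b ∈ V₂ := by
  obtain ⟨p₁, hp₁⟩ := hV₁'
  obtain ⟨p₂, hp₂⟩ := hV₂'
  obtain ⟨ε₁, hε₁, hball₁⟩ := Metric.isOpen_iff.1 hV₁ p₁ hp₁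
  obtain ⟨ε₂, hε₂, hball₂⟩ := Metric.isOpen_iff.1 hV₂ p₂ hp₂
  obtain ⟨n, hn, hdense⟩ := hg U hU hU' (min ε₁ ε₂ / 2) (by positivity)
  obtain ⟨a, ha, hda⟩ := hdense p₁
  obtain ⟨b, hb, hdb⟩ := hdense p₂
  refine ⟨n, hn, a, ha, b, hb, hball₁ ?_, hball₂ ?_⟩ <;> rw [mem_ball]
  · linarith [min_le_left ε₁ ε₂]
  · linarith [min_le_right ε₁ ε₂]

lemma HasDenseIterates.exists_iterate_prodMap_inter_nonempty (hg : HasDenseIterates g)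
    (hcont : Continuous g) (hsurj : Surjective g) {U V : Set (X × X)} (hU : IsOpen U)
    (hU' : U.Nonempty) (hV : IsOpen V) (hV' : V.Nonempty) :
    ∃ n : ℕ, ((Prod.map g g)^[n] '' U ∩ V).Nonempty := by
  obtain ⟨⟨u₁, u₂⟩, hu⟩ := hU'
  obtain ⟨U₁, U₂, hU₁, hU₂, hu₁, hu₂, hUsub⟩ := isOpen_prod_iff.1 hU u₁ u₂ hu
  obtain ⟨⟨v₁, v₂⟩, hv⟩ := hV'
  obtain ⟨V₁, V₂, hV₁, hV₂, hv₁, hv₂, hVsub⟩ := isOpen_prod_iff.1 hV v₁ v₂ hv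
  obtain ⟨m, -, b₀, hb₀, -, -, hmb₀, -⟩ :=
    hg.exists_iterate_mem_mem hU₁ ⟨u₁, hu₁⟩ hU₂ ⟨u₂, hu₂⟩ hU₂ ⟨u₂, hu₂⟩
  have hgm : Continuous g^[m] := hcont.iterate m
  obtain ⟨w₂, hw₂⟩ := hsurj.iterate m v₂
  obtain ⟨n, -, a, ⟨haU₁, -⟩, b, ⟨-, hbU₂⟩, haV₁, hbV₂⟩ :=
    hg.exists_iterate_mem_mem (hU₁.inter (hU₂.preimage hgm)) ⟨b₀, hb₀, hmb₀⟩ hV₁ ⟨v₁, hv₁⟩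
      (hV₂.preimage hgm) ⟨w₂, by rwa [mem_preimage, hw₂]⟩
  refine ⟨n, _, ⟨(a, g^[m] b), hUsub ⟨haU₁, hbU₂⟩, rfl⟩, hVsub ?_⟩
  rw [Prod.map_iterate, Prod.map_apply, ← iterate_add_apply, Nat.add_comm, iterate_add_apply]
  exact ⟨haV₁, hbV₂⟩

end DenseIterates

lemma Spreading.hasDenseIterates {fh : E → E} {g : T → T} (hws : Spreading fh)
    (hlift : Semiconj pr fh g) : HasDenseIterates g := by
  intro U hU hU' ε hε
  obtain ⟨n, hn, c, hdense⟩ := hws (pr ⁻¹' U) (hU.preimage continuous_pr)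
    (hU'.preimage pr_surjective) ε hε 1 one_pos
  refine ⟨n, hn, fun p => ?_⟩
  obtain ⟨z, hz, rfl⟩ := exists_mem_ball_pr_eq c p
  obtain ⟨a, ha, hda⟩ := hdense z hz
  refine ⟨pr a, ha, ?_⟩
  rw [← hlift.iterate_right n a]
  exact (dist_pr_le _ _).trans hda

theorem stmt_15_general (f : T ≃ₜ T) (fh : E → E)
    (hlift : ∀ z : E, pr (fh z) = f (pr z))
    (hws : Spreading fh) :
    (∀ U V : Set (T × T), IsOpen U → U.Nonempty → IsOpen V → V.Nonempty →
      ∃ n : ℕ, ((Prod.map f f)^[n] '' U ∩ V).Nonempty) ∧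
    (∀ U : Set T, IsOpen U → U.Nonempty → ∀ ε > (0 : ℝ), ∃ n > 0,
      ∀ p : T, ∃ a ∈ U, dist ((⇑f)^[n] a) p ≤ ε) := by
  have hf : HasDenseIterates f := hws.hasDenseIterates hlift
  exact ⟨fun U V hU hU' hV hV' =>
    hf.exists_iterate_prodMap_inter_nonempty f.continuous f.surjective hU hU' hV hV', hf⟩

/-- A weak spreading torus homeomorphism is topologically weak mixing; in particular
every nonempty open set has `ε`-dense iterates in the torus for every `ε > 0`. -/
theorem stmt_15 (f : T ≃ₜ T) (fh : E → E) (hc : Continuous fh)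
    (hlift : ∀ z : E, pr (fh z) = f (pr z))
    (hcomm : ∀ (z : E) (v : Fin 2 → ℤ), fh (z + ivec v) = fh z + ivec v)
    (hws : Spreading fh) :
    (∀ U V : Set (T × T), IsOpen U → U.Nonempty → IsOpen V → V.Nonempty →
      ∃ n : ℕ, ((Prod.map f f)^[n] '' U ∩ V).Nonempty) ∧
    (∀ U : Set T, IsOpen U → U.Nonempty → ∀ ε > (0 : ℝ), ∃ n > 0,
      ∀ p : T, ∃ a ∈ U, dist ((⇑f)^[n] a) p ≤ ε) :=
  stmt_15_general f fh hlift hws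
end
end

section
/- Let v̂(x,y) = (x + n·cos(2πqy), y) with n, q positive integers, q ≥ 2n. Suppose γ ⊂ ℝ² is a connected set containing, for every y ∈ [-n, n], a point of the form (s_y, y) with |s_y| ≤ δ/2, where δ/2 < 1/q. Then v̂(γ) is (2/q)-dense in [-n, n] × [-n, n]; in particular, since q ≥ 2n, v̂(γ) is (1/n)-dense in [-n,n] × [-n,n]. -/
/-!
For every height `y`, the horizontal displacement `n cos(2πqy)` of `v̂` runs through all of
`[-n, n]` on any window of heights of length `1/q`. So for a target `p` in the square pick such a
window inside `[-n, n]` containing `p 1`, a height `y` in it with `n cos(2πqy) = p 0`, and the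
point `(s_y, y)` of `γ`: its image `(s_y + p 0, y)` is within `δ/2 < 1/q` of `p` horizontally and
within `1/q` vertically.
-/

open Real
noncomputable section
open Set

theorem exists_mem_Ico_mul_cos_eq {r q x : ℝ} (hq : 0 < q) (hx : |x| ≤ r) (a : ℝ) :
    ∃ y ∈ Ico a (a + q⁻¹), r * cos (2 * π * q * y) = x := by
  have hperiodic : Function.Periodic (fun y ↦ cos (2 * π * q * y)) q⁻¹ := by
    have := cos_periodic.const_mul (2 * π * q)
    rwa [show (2 * π * q)⁻¹ * (2 * π) = q⁻¹ by field_simp] at this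
  obtain ⟨y, hy, hcos⟩ := hperiodic.exists_mem_Ico (inv_pos.2 hq) (arccos (x / r) / (2 * π * q)) a
  refine ⟨y, hy, ?_⟩
  rcases ((abs_nonneg x).trans hx).eq_or_lt with rfl | hr
  · simpa [eq_comm] using hx
  have hxr : |x / r| ≤ 1 := by
    rw [abs_div, abs_of_pos hr]
    exact div_le_one_of_le₀ hx hr.le
  rw [← hcos, mul_div_cancel₀ _ (by positivity), cos_arccos (abs_le.1 hxr).1 (abs_le.1 hxr).2,
    mul_div_cancel₀ _ hr.ne']

theorem EuclideanSpace.dist_le_dist_zero_add_dist_one (x y : EuclideanSpace ℝ (Fin 2)) :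
    dist x y ≤ dist (x 0) (y 0) + dist (x 1) (y 1) := by
  rw [EuclideanSpace.dist_eq, Fin.sum_univ_two]
  have := dist_nonneg (x := x 0) (y := y 0)
  have := dist_nonneg (x := x 1) (y := y 1)
  exact Real.sqrt_le_iff.2 ⟨by positivity, by nlinarith⟩

theorem exists_mem_dist_apply_le (n q δ : ℝ) (hq : 0 < q) (hqn : q⁻¹ ≤ 2 * n)
    (hδ : δ / 2 ≤ q⁻¹) (v : E → E)
    (hv : ∀ z : E, v z 0 = z 0 + n * cos (2 * π * q * z 1) ∧ v z 1 = z 1) (γ : Set E)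
    (hγ : ∀ y : ℝ, -n ≤ y → y ≤ n → ∃ z ∈ γ, z 1 = y ∧ |z 0| ≤ δ / 2)
    (p : E) (hp₀ : |p 0| ≤ n) (hp₁ : |p 1| ≤ n) :
    ∃ z ∈ γ, dist (v z) p ≤ 2 / q := by
  rw [abs_le] at hp₁
  set a := min (p 1) (n - q⁻¹)
  have ha : -n ≤ a := le_min hp₁.1 (by linarith)
  have ha' : a + q⁻¹ ≤ n := by linarith [min_le_right (p 1) (n - q⁻¹)]
  have hpa : p 1 ∈ Icc a (a + q⁻¹) := ⟨min_le_left _ _, by grind⟩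
  obtain ⟨y, hy, hcos⟩ := exists_mem_Ico_mul_cos_eq hq hp₀ a
  obtain ⟨z, hzγ, rfl, hz₀⟩ := hγ y (by linarith [hy.1]) (by linarith [hy.2])
  refine ⟨z, hzγ, (EuclideanSpace.dist_le_dist_zero_add_dist_one _ _).trans ?_⟩
  have h₀ : dist (v z 0) (p 0) ≤ q⁻¹ := by
    rw [(hv z).1, hcos, Real.dist_eq, add_sub_cancel_right]
    linarith
  have h₁ : dist (v z 1) (p 1) ≤ q⁻¹ := by
    rw [(hv z).2, Real.dist_eq, abs_le]
    constructor <;> linarith [hy.1, hy.2, hpa.1, hpa.2]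
  linarith [div_eq_mul_inv 2 q]

theorem stmt_19_general (n q : ℕ) (hn : 0 < n) (hq : 2 * n ≤ q) (δ : ℝ) (hδ : δ / 2 < 1 / (q : ℝ))
    (v : E → E)
    (hv : ∀ z : E, v z 0 = z 0 + (n : ℝ) * Real.cos (2 * π * (q : ℝ) * z 1) ∧ v z 1 = z 1)
    (γ : Set E)
    (hγ : ∀ y : ℝ, -(n : ℝ) ≤ y → y ≤ (n : ℝ) → ∃ z ∈ γ, z 1 = y ∧ |z 0| ≤ δ / 2) :
    (∀ p : E, |p 0| ≤ (n : ℝ) → |p 1| ≤ (n : ℝ) →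
      ∃ z ∈ γ, dist (v z) p ≤ 2 / (q : ℝ)) ∧
    (∀ p : E, |p 0| ≤ (n : ℝ) → |p 1| ≤ (n : ℝ) →
      ∃ z ∈ γ, dist (v z) p ≤ 1 / (n : ℝ)) := by
  have hn' : (0 : ℝ) < n := by exact_mod_cast hn
  have hn₁ : (1 : ℝ) ≤ n := by exact_mod_cast hn
  have hqn : 2 * (n : ℝ) ≤ q := by exact_mod_cast hq
  have hq' : (0 : ℝ) < q := by linarith
  have hq_inv : (q : ℝ)⁻¹ ≤ 2 * n := by
    rw [inv_le_iff_one_le_mul₀ hq']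
    nlinarith
  have dense := exists_mem_dist_apply_le n q δ hq' hq_inv (by simpa using hδ.le) v hv γ hγ
  refine ⟨dense, fun p hp₀ hp₁ ↦ ?_⟩
  obtain ⟨z, hzγ, hz⟩ := dense p hp₀ hp₁
  refine ⟨z, hzγ, hz.trans ?_⟩
  rw [div_le_div_iff₀ hq' hn']
  linarith

/-- If a connected set `γ` contains, for every `y ∈ [-n,n]`, a point `(s_y, y)` with
`|s_y| ≤ δ/2 < 1/q`, then `v̂(γ)` is `(2/q)`-dense in `[-n,n]²`; since `q ≥ 2n` it is
in particular `(1/n)`-dense there. -/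
theorem stmt_19 (n q : ℕ) (hn : 0 < n) (hq : 2 * n ≤ q) (δ : ℝ) (hδ : δ / 2 < 1 / (q : ℝ))
    (v : E → E)
    (hv : ∀ z : E, v z 0 = z 0 + (n : ℝ) * Real.cos (2 * π * (q : ℝ) * z 1) ∧ v z 1 = z 1)
    (γ : Set E) (hγc : IsConnected γ)
    (hγ : ∀ y : ℝ, -(n : ℝ) ≤ y → y ≤ (n : ℝ) → ∃ z ∈ γ, z 1 = y ∧ |z 0| ≤ δ / 2) :
    (∀ p : E, |p 0| ≤ (n : ℝ) → |p 1| ≤ (n : ℝ) →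
      ∃ z ∈ γ, dist (v z) p ≤ 2 / (q : ℝ)) ∧
    (∀ p : E, |p 0| ≤ (n : ℝ) → |p 1| ≤ (n : ℝ) →
      ∃ z ∈ γ, dist (v z) p ≤ 1 / (n : ℝ)) :=
  stmt_19_general n q hn hq δ hδ v hv γ hγ
end
end
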